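/- arXiv:2009.02350 — 3 statements merged into one kernel-verified Lean document; each statement's English description precedes it below -/
import Mathlib

section
/- Suppose n(ū,k) Ω″(k) < 0 where n(ū,k) = k( (f″(ū))²/Ω′(k) + k(f″(ū))²/(2Ω(k) − Ω(2k)) + f‴(ū)/2 ). Then for all sufficiently small a > 0, the matrix B of the weakly nonlinear Whitham modulation equations (as in the previous context) has a pair of non-real complex conjugate eigenvalues; i.e., the modulation system is not hyperbolic. -/
open Real Complex Polynomial

private lemma charpoly_fin3' {R : Type*} [CommRing R]
    (b11 b12 b13 b21 b22 b23 b31 b32 b33 : R) :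
    (!![b11,b12,b13;b21,b22,b23;b31,b32,b33]).charpoly =
      X^3 + C (-(b11 + b22 + b33)) * X^2
        + C (b11*b22 + b11*b33 + b22*b33 - b12*b21 - b13*b31 - b23*b32) * X
        + C (-(b11*(b22*b33 - b23*b32) - b12*(b21*b33 - b23*b31) + b13*(b21*b32 - b22*b31))) := by
  rw [Matrix.charpoly, Matrix.det_fin_three]
  simp [Matrix.charmatrix_apply_eq, Matrix.charmatrix_apply_ne, map_add, map_mul, map_sub, map_neg]
  ring

private lemma cubic_factor (u v w : ℂ) :
    ∃ z1 z2 z3 : ℂ, X^3 + C u * X^2 + C v * X + C w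
      = (X - C z1) * (X - C z2) * (X - C z3) := by
  set p : ℂ[X] := X^3 + C u * X^2 + C v * X + C w with hp
  have hm : p.Monic := by rw [hp]; monicity!
  have hdeg : p.natDegree = 3 := by rw [hp]; compute_degree!
  have hcard : p.roots.card = 3 := by
    rw [← hdeg]
    exact (splits_iff_card_roots.mp (IsAlgClosed.splits p))
  obtain ⟨z1, z2, z3, hz⟩ := Multiset.card_eq_three.mp hcard
  refine ⟨z1, z2, z3, ?_⟩
  have h2 := prod_multiset_X_sub_C_of_monic_of_roots_card_eq hm (by rw [hcard, hdeg])
  rw [hz] at h2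
  simp at h2
  rw [← h2]; ring

private lemma cubic_nonreal_root (u v w : ℝ)
    (h : 18*u*v*w - 4*u^3*w + u^2*v^2 - 4*v^3 - 27*w^2 < 0) :
    ∃ z : ℂ, z.im ≠ 0 ∧ (X^3 + C (u:ℂ)*X^2 + C (v:ℂ)*X + C (w:ℂ)).IsRoot z
      ∧ (X^3 + C (u:ℂ)*X^2 + C (v:ℂ)*X + C (w:ℂ)).IsRoot ((starRingEnd ℂ) z) := by
  obtain ⟨z1, z2, z3, hfac⟩ := cubic_factor (u:ℂ) (v:ℂ) (w:ℂ)
  have hexp : (X - C z1) * (X - C z2) * (X - C z3)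
      = X^3 + C (-(z1+z2+z3))*X^2 + C (z1*z2+z1*z3+z2*z3)*X + C (-(z1*z2*z3)) := by
    simp only [map_add, map_mul, map_neg]; ring
  rw [hexp] at hfac
  have hu : (u:ℂ) = -(z1+z2+z3) := by
    have := congrArg (fun q => Polynomial.coeff q 2) hfac
    simpa [coeff_X_pow, add_mul, neg_mul] using this
  have hv : (v:ℂ) = z1*z2+z1*z3+z2*z3 := by
    have := congrArg (fun q => Polynomial.coeff q 1) hfac
    simpa [coeff_X_pow, add_mul, neg_mul] using this
  have hw : (w:ℂ) = -(z1*z2*z3) := by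
    have := congrArg (fun q => Polynomial.coeff q 0) hfac
    simpa [coeff_X_pow, add_mul, neg_mul] using this
  have hd : ((z1-z2)*(z1-z3)*(z2-z3))^2
      = ((18*u*v*w - 4*u^3*w + u^2*v^2 - 4*v^3 - 27*w^2 : ℝ) : ℂ) := by
    push_cast
    rw [hu, hv, hw]; ring
  have key : z1.im ≠ 0 ∨ z2.im ≠ 0 ∨ z3.im ≠ 0 := by
    by_contra hc
    push_neg at hc
    obtain ⟨h1, h2, h3⟩ := hc
    set t := (z1-z2)*(z1-z3)*(z2-z3) with ht
    have htim : t.im = 0 := by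
      simp [ht, Complex.mul_im, Complex.sub_im, Complex.sub_re, h1, h2, h3]
    have hsq : (t^2).re = t.re^2 := by
      rw [sq, sq, Complex.mul_re, htim]; ring
    have hre := congrArg Complex.re hd
    rw [hsq, Complex.ofReal_re] at hre
    nlinarith [sq_nonneg t.re]
  have hev : ∀ y : ℂ, (X^3 + C (u:ℂ)*X^2 + C (v:ℂ)*X + C (w:ℂ)).eval y
      = y^3 + u*y^2 + v*y + w := by intro y; simp
  have hconj : ∀ z : ℂ, (X^3 + C (u:ℂ)*X^2 + C (v:ℂ)*X + C (w:ℂ)).IsRoot z →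
      (X^3 + C (u:ℂ)*X^2 + C (v:ℂ)*X + C (w:ℂ)).IsRoot ((starRingEnd ℂ) z) := by
    intro z hz
    have hz' : z^3 + u*z^2 + v*z + w = 0 := by rw [← hev]; exact hz
    have hcc : ((starRingEnd ℂ) z)^3 + (u:ℂ)*((starRingEnd ℂ) z)^2 + (v:ℂ)*((starRingEnd ℂ) z) + (w:ℂ)
        = (starRingEnd ℂ) (z^3 + u*z^2 + v*z + w) := by
      rw [map_add, map_add, map_add, map_mul, map_mul, map_pow, map_pow,
        Complex.conj_ofReal, Complex.conj_ofReal, Complex.conj_ofReal]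
    unfold Polynomial.IsRoot
    rw [hev, hcc, hz', map_zero]
  have hroot : ∀ z ∈ ({z1, z2, z3} : Set ℂ),
      (X^3 + C (u:ℂ)*X^2 + C (v:ℂ)*X + C (w:ℂ)).IsRoot z := by
    intro z hz
    unfold Polynomial.IsRoot
    rw [hfac, ← hexp]
    rcases hz with rfl | rfl | rfl <;> simp
  rcases key with h1 | h2 | h3
  · exact ⟨z1, h1, hroot z1 (by simp), hconj z1 (hroot z1 (by simp))⟩
  · exact ⟨z2, h2, hroot z2 (by simp), hconj z2 (hroot z2 (by simp))⟩
  · exact ⟨z3, h3, hroot z3 (by simp), hconj z3 (hroot z3 (by simp))⟩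

private lemma disc_horner (p0 p1 q0 q1 q2 r0 r1 r2 r3 s : ℝ) :
    18*(p0 + s*p1)*(q0 + s*(q1 + s*q2))*(r0 + s*(r1 + s*(r2 + s*r3))) - 4*(p0 + s*p1)^3*(r0 + s*(r1 + s*(r2 + s*r3))) + (p0 + s*p1)^2*(q0 + s*(q1 + s*q2))^2 - 4*(q0 + s*(q1 + s*q2))^3 - 27*(r0 + s*(r1 + s*(r2 + s*r3)))^2
      = ((-27)*r0^2 + (-4)*q0^3 + 18*p0*q0*r0 + 1*p0^2*q0^2 + (-4)*p0^3*r0) + s*(((-54)*r0*r1 + (-12)*q0^2*q1 + 18*p1*q0*r0 + 18*p0*q1*r0 + 18*p0*q0*r1 + 2*p0*p1*q0^2 + 2*p0^2*q0*q1 + (-12)*p0^2*p1*r0 + (-4)*p0^3*r1) + s*(((-27)*r1^2 + (-54)*r0*r2 + (-12)*q0*q1^2 + (-12)*q0^2*q2 + 18*p1*q1*r0 + 18*p1*q0*r1 + 1*p1^2*q0^2 + 18*p0*q2*r0 + 18*p0*q1*r1 + 18*p0*q0*r2 + 4*p0*p1*q0*q1 + (-12)*p0*p1^2*r0 + 1*p0^2*q1^2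 + 2*p0^2*q0*q2 + (-12)*p0^2*p1*r1 + (-4)*p0^3*r2) + s*(((-54)*r1*r2 + (-54)*r0*r3 + (-4)*q1^3 + (-24)*q0*q1*q2 + 18*p1*q2*r0 + 18*p1*q1*r1 + 18*p1*q0*r2 + 2*p1^2*q0*q1 + (-4)*p1^3*r0 + 18*p0*q2*r1 + 18*p0*q1*r2 + 18*p0*q0*r3 + 2*p0*p1*q1^2 + 4*p0*p1*q0*q2 + (-12)*p0*p1^2*r1 + 2*p0^2*q1*q2 + (-12)*p0^2*p1*r2 + (-4)*p0^3*r3) + s*(((-27)*r2^2 + (-54)*r1*r3 + (-12)*q1^2*q2 + (-12)*q0*q2^2 + 18*p1*q2*r1 + 18*p1*q1*r2 + 18*p1*q0*r3 + 1*p1^2*q1^2 + 2*p1^2*q0*q2 + (-4)*p1^3*r1 + 18*p0*q2*r2 + 18*p0*q1*r3 + 4*p0*p1*q1*q2 + (-12)*p0*p1^2*r2 + 1*p0^2*q2^2 + (-12)*p0^2*p1*r3) + s*(((-54)*r2*r3 + (-12)*q1*q2^2 + 18*p1*q2*r2 + 18*p1*q1*r3 + 2*p1^2*q1*q2 + (-4)*p1^3*r2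 + 18*p0*q2*r3 + 2*p0*p1*q2^2 + (-12)*p0*p1^2*r3) + s*((-27)*r3^2 + (-4)*q2^3 + 18*p1*q2*r3 + 1*p1^2*q2^2 + (-4)*p1^3*r3)))))) := by
  ring

set_option maxHeartbeats 1000000 in
private lemma mod_disc_factor (f1 f2 f3 O1 O2 W2 Wu Wk Ec k : ℝ) :
    ∃ c2 c3 c4 c5 c6 : ℝ, ∀ s : ℝ,
      18*-((f1 + s/16*f3) + (f1 + O1 + Ec*s) + (f1 + O1 + s*Wk))*((f1 + s/16*f3)*(f1 + O1 + Ec*s) + (f1 + s/16*f3)*(f1 + O1 + s*Wk) + (f1 + O1 + Ec*s)*(f1 + O1 + s*Wk) - (1/16*f2)*(2*s*f2) - (0:ℝ)*(f2*k + s*Wu) - (s*O2)*W2)*-((f1 + s/16*f3)*((f1 + O1 + Ec*s)*(f1 + O1 + s*Wk) - (s*O2)*W2) - (1/16*f2)*((2*s*f2)*(f1 + O1 + s*Wk) - (s*O2)*(f2*k + s*Wu)) + (0:ℝ)*((2*s*f2)*W2 - (f1 + O1 + Ec*s)*(f2*k + s*Wu))) - 4*(-((f1 + s/16*f3) + (f1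 + O1 + Ec*s) + (f1 + O1 + s*Wk)))^3*-((f1 + s/16*f3)*((f1 + O1 + Ec*s)*(f1 + O1 + s*Wk) - (s*O2)*W2) - (1/16*f2)*((2*s*f2)*(f1 + O1 + s*Wk) - (s*O2)*(f2*k + s*Wu)) + (0:ℝ)*((2*s*f2)*W2 - (f1 + O1 + Ec*s)*(f2*k + s*Wu))) + (-((f1 + s/16*f3) + (f1 + O1 + Ec*s) + (f1 + O1 + s*Wk)))^2*(((f1 + s/16*f3)*(f1 + O1 + Ec*s) + (f1 + s/16*f3)*(f1 + O1 + s*Wk) + (f1 + O1 + Ec*s)*(f1 + O1 + s*Wk) - (1/16*f2)*(2*s*f2) - (0:ℝ)*(f2*k + s*Wu) - (s*O2)*W2))^2 - 4*(((f1 + s/16*f3)*(f1 + O1 + Ec*s) + (f1 + s/16*f3)*(f1 + O1 + s*Wk) + (f1 + O1 + Ec*s)*(f1 + O1 + s*Wk) - (1/16*f2)*(2*s*f2) - (0:ℝ)*(f2*k + s*Wu) - (s*O2)*W2))^3 - 27*(-((f1 + s/16*f3)*((f1 + O1 + Ec*s)*(f1 + O1 + s*Wk) - (s*O2)*W2) -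 (1/16*f2)*((2*s*f2)*(f1 + O1 + s*Wk) - (s*O2)*(f2*k + s*Wu)) + (0:ℝ)*((2*s*f2)*W2 - (f1 + O1 + Ec*s)*(f2*k + s*Wu))))^2
        = s * ((4*O1^4*O2*W2 + (1/4)*f2^2*O1^3*O2*k) + s*(c2 + s*(c3 + s*(c4 + s*(c5 + s*c6))))) := by
  refine ⟨((-27)*(((-1)/16)*f3*O1^2 + ((-1)/16)*f2^2*O2*k + (1/8)*f2^2*O1 + 1*f1*O2*W2 + (-1)*f1*O1*Ec + (-1)*f1*O1*Wk + ((-1)/8)*f1*f3*O1 + (1/8)*f1*f2^2 + (-1)*f1^2*Ec + (-1)*f1^2*Wk + ((-1)/16)*f1^2*f3)^2 + (-54)*((-1)*f1*O1^2 + (-2)*f1^2*O1 + (-1)*f1^3)*((1/16)*f3*O2*W2 + ((-1)/16)*f3*O1*Ec + ((-1)/16)*f3*O1*Wk + ((-1)/16)*f2*O2*Wu + (1/8)*f2^2*Wk + (-1)*f1*Wk*Ec + ((-1)/16)*f1*f3*Ec + ((-1)/16)*f1*f3*Wk) + (-12)*(1*O1^2 + 4*f1*O1 + 3*f1^2)*((-1)*O2*W2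 + 1*O1*Ec + 1*O1*Wk + (1/8)*f3*O1 + ((-1)/8)*f2^2 + 2*f1*Ec + 2*f1*Wk + (1/8)*f1*f3)^2 + (-12)*(1*O1^2 + 4*f1*O1 + 3*f1^2)^2*(1*Wk*Ec + (1/16)*f3*Ec + (1/16)*f3*Wk) + 18*((-1)*Ec + (-1)*Wk + ((-1)/16)*f3)*((-1)*O2*W2 + 1*O1*Ec + 1*O1*Wk + (1/8)*f3*O1 + ((-1)/8)*f2^2 + 2*f1*Ec + 2*f1*Wk + (1/8)*f1*f3)*((-1)*f1*O1^2 + (-2)*f1^2*O1 + (-1)*f1^3) + 18*((-1)*Ec + (-1)*Wk + ((-1)/16)*f3)*(1*O1^2 + 4*f1*O1 + 3*f1^2)*(((-1)/16)*f3*O1^2 + ((-1)/16)*f2^2*O2*k + (1/8)*f2^2*O1 + 1*f1*O2*W2 + (-1)*f1*O1*Ec + (-1)*f1*O1*Wk + ((-1)/8)*f1*f3*O1 + (1/8)*f1*f2^2 + (-1)*f1^2*Ec + (-1)*f1^2*Wk + ((-1)/16)*f1^2*f3) + 1*((-1)*Ec + (-1)*Wk + ((-1)/16)*f3)^2*(1*O1^2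 + 4*f1*O1 + 3*f1^2)^2 + 18*((-2)*O1 + (-3)*f1)*(1*Wk*Ec + (1/16)*f3*Ec + (1/16)*f3*Wk)*((-1)*f1*O1^2 + (-2)*f1^2*O1 + (-1)*f1^3) + 18*((-2)*O1 + (-3)*f1)*((-1)*O2*W2 + 1*O1*Ec + 1*O1*Wk + (1/8)*f3*O1 + ((-1)/8)*f2^2 + 2*f1*Ec + 2*f1*Wk + (1/8)*f1*f3)*(((-1)/16)*f3*O1^2 + ((-1)/16)*f2^2*O2*k + (1/8)*f2^2*O1 + 1*f1*O2*W2 + (-1)*f1*O1*Ec + (-1)*f1*O1*Wk + ((-1)/8)*f1*f3*O1 + (1/8)*f1*f2^2 + (-1)*f1^2*Ec + (-1)*f1^2*Wk + ((-1)/16)*f1^2*f3) + 18*((-2)*O1 + (-3)*f1)*(1*O1^2 + 4*f1*O1 + 3*f1^2)*((1/16)*f3*O2*W2 + ((-1)/16)*f3*O1*Ec + ((-1)/16)*f3*O1*Wk + ((-1)/16)*f2*O2*Wu + (1/8)*f2^2*Wk + (-1)*f1*Wk*Ec + ((-1)/16)*f1*f3*Ec + ((-1)/16)*f1*f3*Wk)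 + 4*((-2)*O1 + (-3)*f1)*((-1)*Ec + (-1)*Wk + ((-1)/16)*f3)*(1*O1^2 + 4*f1*O1 + 3*f1^2)*((-1)*O2*W2 + 1*O1*Ec + 1*O1*Wk + (1/8)*f3*O1 + ((-1)/8)*f2^2 + 2*f1*Ec + 2*f1*Wk + (1/8)*f1*f3) + (-12)*((-2)*O1 + (-3)*f1)*((-1)*Ec + (-1)*Wk + ((-1)/16)*f3)^2*((-1)*f1*O1^2 + (-2)*f1^2*O1 + (-1)*f1^3) + 1*((-2)*O1 + (-3)*f1)^2*((-1)*O2*W2 + 1*O1*Ec + 1*O1*Wk + (1/8)*f3*O1 + ((-1)/8)*f2^2 + 2*f1*Ec + 2*f1*Wk + (1/8)*f1*f3)^2 + 2*((-2)*O1 + (-3)*f1)^2*(1*O1^2 + 4*f1*O1 + 3*f1^2)*(1*Wk*Ec + (1/16)*f3*Ec + (1/16)*f3*Wk) + (-12)*((-2)*O1 + (-3)*f1)^2*((-1)*Ec + (-1)*Wk + ((-1)/16)*f3)*(((-1)/16)*f3*O1^2 + ((-1)/16)*f2^2*O2*k + (1/8)*f2^2*O1 + 1*f1*O2*W2 + (-1)*f1*O1*Ec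 + (-1)*f1*O1*Wk + ((-1)/8)*f1*f3*O1 + (1/8)*f1*f2^2 + (-1)*f1^2*Ec + (-1)*f1^2*Wk + ((-1)/16)*f1^2*f3) + (-4)*((-2)*O1 + (-3)*f1)^3*((1/16)*f3*O2*W2 + ((-1)/16)*f3*O1*Ec + ((-1)/16)*f3*O1*Wk + ((-1)/16)*f2*O2*Wu + (1/8)*f2^2*Wk + (-1)*f1*Wk*Ec + ((-1)/16)*f1*f3*Ec + ((-1)/16)*f1*f3*Wk)), ((-54)*(((-1)/16)*f3*O1^2 + ((-1)/16)*f2^2*O2*k + (1/8)*f2^2*O1 + 1*f1*O2*W2 + (-1)*f1*O1*Ec + (-1)*f1*O1*Wk + ((-1)/8)*f1*f3*O1 + (1/8)*f1*f2^2 + (-1)*f1^2*Ec + (-1)*f1^2*Wk + ((-1)/16)*f1^2*f3)*((1/16)*f3*O2*W2 + ((-1)/16)*f3*O1*Ec + ((-1)/16)*f3*O1*Wk + ((-1)/16)*f2*O2*Wu + (1/8)*f2^2*Wk + (-1)*f1*Wk*Ec + ((-1)/16)*f1*f3*Ec + ((-1)/16)*f1*f3*Wk) + (-54)*((-1)*f1*O1^2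 + (-2)*f1^2*O1 + (-1)*f1^3)*(((-1)/16)*f3*Wk*Ec) + (-4)*((-1)*O2*W2 + 1*O1*Ec + 1*O1*Wk + (1/8)*f3*O1 + ((-1)/8)*f2^2 + 2*f1*Ec + 2*f1*Wk + (1/8)*f1*f3)^3 + (-24)*(1*O1^2 + 4*f1*O1 + 3*f1^2)*((-1)*O2*W2 + 1*O1*Ec + 1*O1*Wk + (1/8)*f3*O1 + ((-1)/8)*f2^2 + 2*f1*Ec + 2*f1*Wk + (1/8)*f1*f3)*(1*Wk*Ec + (1/16)*f3*Ec + (1/16)*f3*Wk) + 18*((-1)*Ec + (-1)*Wk + ((-1)/16)*f3)*(1*Wk*Ec + (1/16)*f3*Ec + (1/16)*f3*Wk)*((-1)*f1*O1^2 + (-2)*f1^2*O1 + (-1)*f1^3) + 18*((-1)*Ec + (-1)*Wk + ((-1)/16)*f3)*((-1)*O2*W2 + 1*O1*Ec + 1*O1*Wk + (1/8)*f3*O1 + ((-1)/8)*f2^2 + 2*f1*Ec + 2*f1*Wk + (1/8)*f1*f3)*(((-1)/16)*f3*O1^2 + ((-1)/16)*f2^2*O2*k + (1/8)*f2^2*O1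 + 1*f1*O2*W2 + (-1)*f1*O1*Ec + (-1)*f1*O1*Wk + ((-1)/8)*f1*f3*O1 + (1/8)*f1*f2^2 + (-1)*f1^2*Ec + (-1)*f1^2*Wk + ((-1)/16)*f1^2*f3) + 18*((-1)*Ec + (-1)*Wk + ((-1)/16)*f3)*(1*O1^2 + 4*f1*O1 + 3*f1^2)*((1/16)*f3*O2*W2 + ((-1)/16)*f3*O1*Ec + ((-1)/16)*f3*O1*Wk + ((-1)/16)*f2*O2*Wu + (1/8)*f2^2*Wk + (-1)*f1*Wk*Ec + ((-1)/16)*f1*f3*Ec + ((-1)/16)*f1*f3*Wk) + 2*((-1)*Ec + (-1)*Wk + ((-1)/16)*f3)^2*(1*O1^2 + 4*f1*O1 + 3*f1^2)*((-1)*O2*W2 + 1*O1*Ec + 1*O1*Wk + (1/8)*f3*O1 + ((-1)/8)*f2^2 + 2*f1*Ec + 2*f1*Wk + (1/8)*f1*f3) + (-4)*((-1)*Ec + (-1)*Wk + ((-1)/16)*f3)^3*((-1)*f1*O1^2 + (-2)*f1^2*O1 + (-1)*f1^3) + 18*((-2)*O1 + (-3)*f1)*(1*Wk*Ec + (1/16)*f3*Ec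 + (1/16)*f3*Wk)*(((-1)/16)*f3*O1^2 + ((-1)/16)*f2^2*O2*k + (1/8)*f2^2*O1 + 1*f1*O2*W2 + (-1)*f1*O1*Ec + (-1)*f1*O1*Wk + ((-1)/8)*f1*f3*O1 + (1/8)*f1*f2^2 + (-1)*f1^2*Ec + (-1)*f1^2*Wk + ((-1)/16)*f1^2*f3) + 18*((-2)*O1 + (-3)*f1)*((-1)*O2*W2 + 1*O1*Ec + 1*O1*Wk + (1/8)*f3*O1 + ((-1)/8)*f2^2 + 2*f1*Ec + 2*f1*Wk + (1/8)*f1*f3)*((1/16)*f3*O2*W2 + ((-1)/16)*f3*O1*Ec + ((-1)/16)*f3*O1*Wk + ((-1)/16)*f2*O2*Wu + (1/8)*f2^2*Wk + (-1)*f1*Wk*Ec + ((-1)/16)*f1*f3*Ec + ((-1)/16)*f1*f3*Wk) + 18*((-2)*O1 + (-3)*f1)*(1*O1^2 + 4*f1*O1 + 3*f1^2)*(((-1)/16)*f3*Wk*Ec) + 2*((-2)*O1 + (-3)*f1)*((-1)*Ec + (-1)*Wk + ((-1)/16)*f3)*((-1)*O2*W2 + 1*O1*Ec + 1*O1*Wk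 + (1/8)*f3*O1 + ((-1)/8)*f2^2 + 2*f1*Ec + 2*f1*Wk + (1/8)*f1*f3)^2 + 4*((-2)*O1 + (-3)*f1)*((-1)*Ec + (-1)*Wk + ((-1)/16)*f3)*(1*O1^2 + 4*f1*O1 + 3*f1^2)*(1*Wk*Ec + (1/16)*f3*Ec + (1/16)*f3*Wk) + (-12)*((-2)*O1 + (-3)*f1)*((-1)*Ec + (-1)*Wk + ((-1)/16)*f3)^2*(((-1)/16)*f3*O1^2 + ((-1)/16)*f2^2*O2*k + (1/8)*f2^2*O1 + 1*f1*O2*W2 + (-1)*f1*O1*Ec + (-1)*f1*O1*Wk + ((-1)/8)*f1*f3*O1 + (1/8)*f1*f2^2 + (-1)*f1^2*Ec + (-1)*f1^2*Wk + ((-1)/16)*f1^2*f3) + 2*((-2)*O1 + (-3)*f1)^2*((-1)*O2*W2 + 1*O1*Ec + 1*O1*Wk + (1/8)*f3*O1 + ((-1)/8)*f2^2 + 2*f1*Ec + 2*f1*Wk + (1/8)*f1*f3)*(1*Wk*Ec + (1/16)*f3*Ec + (1/16)*f3*Wk) + (-12)*((-2)*O1 + (-3)*f1)^2*((-1)*Ec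 + (-1)*Wk + ((-1)/16)*f3)*((1/16)*f3*O2*W2 + ((-1)/16)*f3*O1*Ec + ((-1)/16)*f3*O1*Wk + ((-1)/16)*f2*O2*Wu + (1/8)*f2^2*Wk + (-1)*f1*Wk*Ec + ((-1)/16)*f1*f3*Ec + ((-1)/16)*f1*f3*Wk) + (-4)*((-2)*O1 + (-3)*f1)^3*(((-1)/16)*f3*Wk*Ec)), ((-27)*((1/16)*f3*O2*W2 + ((-1)/16)*f3*O1*Ec + ((-1)/16)*f3*O1*Wk + ((-1)/16)*f2*O2*Wu + (1/8)*f2^2*Wk + (-1)*f1*Wk*Ec + ((-1)/16)*f1*f3*Ec + ((-1)/16)*f1*f3*Wk)^2 + (-54)*(((-1)/16)*f3*O1^2 + ((-1)/16)*f2^2*O2*k + (1/8)*f2^2*O1 + 1*f1*O2*W2 + (-1)*f1*O1*Ec + (-1)*f1*O1*Wk + ((-1)/8)*f1*f3*O1 + (1/8)*f1*f2^2 + (-1)*f1^2*Ec + (-1)*f1^2*Wk + ((-1)/16)*f1^2*f3)*(((-1)/16)*f3*Wk*Ec) + (-12)*((-1)*O2*W2 + 1*O1*Ec + 1*O1*Wk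 + (1/8)*f3*O1 + ((-1)/8)*f2^2 + 2*f1*Ec + 2*f1*Wk + (1/8)*f1*f3)^2*(1*Wk*Ec + (1/16)*f3*Ec + (1/16)*f3*Wk) + (-12)*(1*O1^2 + 4*f1*O1 + 3*f1^2)*(1*Wk*Ec + (1/16)*f3*Ec + (1/16)*f3*Wk)^2 + 18*((-1)*Ec + (-1)*Wk + ((-1)/16)*f3)*(1*Wk*Ec + (1/16)*f3*Ec + (1/16)*f3*Wk)*(((-1)/16)*f3*O1^2 + ((-1)/16)*f2^2*O2*k + (1/8)*f2^2*O1 + 1*f1*O2*W2 + (-1)*f1*O1*Ec + (-1)*f1*O1*Wk + ((-1)/8)*f1*f3*O1 + (1/8)*f1*f2^2 + (-1)*f1^2*Ec + (-1)*f1^2*Wk + ((-1)/16)*f1^2*f3) + 18*((-1)*Ec + (-1)*Wk + ((-1)/16)*f3)*((-1)*O2*W2 + 1*O1*Ec + 1*O1*Wk + (1/8)*f3*O1 + ((-1)/8)*f2^2 + 2*f1*Ec + 2*f1*Wk + (1/8)*f1*f3)*((1/16)*f3*O2*W2 + ((-1)/16)*f3*O1*Ec + ((-1)/16)*f3*O1*Wk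 + ((-1)/16)*f2*O2*Wu + (1/8)*f2^2*Wk + (-1)*f1*Wk*Ec + ((-1)/16)*f1*f3*Ec + ((-1)/16)*f1*f3*Wk) + 18*((-1)*Ec + (-1)*Wk + ((-1)/16)*f3)*(1*O1^2 + 4*f1*O1 + 3*f1^2)*(((-1)/16)*f3*Wk*Ec) + 1*((-1)*Ec + (-1)*Wk + ((-1)/16)*f3)^2*((-1)*O2*W2 + 1*O1*Ec + 1*O1*Wk + (1/8)*f3*O1 + ((-1)/8)*f2^2 + 2*f1*Ec + 2*f1*Wk + (1/8)*f1*f3)^2 + 2*((-1)*Ec + (-1)*Wk + ((-1)/16)*f3)^2*(1*O1^2 + 4*f1*O1 + 3*f1^2)*(1*Wk*Ec + (1/16)*f3*Ec + (1/16)*f3*Wk) + (-4)*((-1)*Ec + (-1)*Wk + ((-1)/16)*f3)^3*(((-1)/16)*f3*O1^2 + ((-1)/16)*f2^2*O2*k + (1/8)*f2^2*O1 + 1*f1*O2*W2 + (-1)*f1*O1*Ec + (-1)*f1*O1*Wk + ((-1)/8)*f1*f3*O1 + (1/8)*f1*f2^2 + (-1)*f1^2*Ec + (-1)*f1^2*Wk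 + ((-1)/16)*f1^2*f3) + 18*((-2)*O1 + (-3)*f1)*(1*Wk*Ec + (1/16)*f3*Ec + (1/16)*f3*Wk)*((1/16)*f3*O2*W2 + ((-1)/16)*f3*O1*Ec + ((-1)/16)*f3*O1*Wk + ((-1)/16)*f2*O2*Wu + (1/8)*f2^2*Wk + (-1)*f1*Wk*Ec + ((-1)/16)*f1*f3*Ec + ((-1)/16)*f1*f3*Wk) + 18*((-2)*O1 + (-3)*f1)*((-1)*O2*W2 + 1*O1*Ec + 1*O1*Wk + (1/8)*f3*O1 + ((-1)/8)*f2^2 + 2*f1*Ec + 2*f1*Wk + (1/8)*f1*f3)*(((-1)/16)*f3*Wk*Ec) + 4*((-2)*O1 + (-3)*f1)*((-1)*Ec + (-1)*Wk + ((-1)/16)*f3)*((-1)*O2*W2 + 1*O1*Ec + 1*O1*Wk + (1/8)*f3*O1 + ((-1)/8)*f2^2 + 2*f1*Ec + 2*f1*Wk + (1/8)*f1*f3)*(1*Wk*Ec + (1/16)*f3*Ec + (1/16)*f3*Wk) + (-12)*((-2)*O1 + (-3)*f1)*((-1)*Ec + (-1)*Wk + ((-1)/16)*f3)^2*((1/16)*f3*O2*W2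 + ((-1)/16)*f3*O1*Ec + ((-1)/16)*f3*O1*Wk + ((-1)/16)*f2*O2*Wu + (1/8)*f2^2*Wk + (-1)*f1*Wk*Ec + ((-1)/16)*f1*f3*Ec + ((-1)/16)*f1*f3*Wk) + 1*((-2)*O1 + (-3)*f1)^2*(1*Wk*Ec + (1/16)*f3*Ec + (1/16)*f3*Wk)^2 + (-12)*((-2)*O1 + (-3)*f1)^2*((-1)*Ec + (-1)*Wk + ((-1)/16)*f3)*(((-1)/16)*f3*Wk*Ec)), ((-54)*((1/16)*f3*O2*W2 + ((-1)/16)*f3*O1*Ec + ((-1)/16)*f3*O1*Wk + ((-1)/16)*f2*O2*Wu + (1/8)*f2^2*Wk + (-1)*f1*Wk*Ec + ((-1)/16)*f1*f3*Ec + ((-1)/16)*f1*f3*Wk)*(((-1)/16)*f3*Wk*Ec) + (-12)*((-1)*O2*W2 + 1*O1*Ec + 1*O1*Wk + (1/8)*f3*O1 + ((-1)/8)*f2^2 + 2*f1*Ec + 2*f1*Wk + (1/8)*f1*f3)*(1*Wk*Ec + (1/16)*f3*Ec + (1/16)*f3*Wk)^2 + 18*((-1)*Ec + (-1)*Wk +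 ((-1)/16)*f3)*(1*Wk*Ec + (1/16)*f3*Ec + (1/16)*f3*Wk)*((1/16)*f3*O2*W2 + ((-1)/16)*f3*O1*Ec + ((-1)/16)*f3*O1*Wk + ((-1)/16)*f2*O2*Wu + (1/8)*f2^2*Wk + (-1)*f1*Wk*Ec + ((-1)/16)*f1*f3*Ec + ((-1)/16)*f1*f3*Wk) + 18*((-1)*Ec + (-1)*Wk + ((-1)/16)*f3)*((-1)*O2*W2 + 1*O1*Ec + 1*O1*Wk + (1/8)*f3*O1 + ((-1)/8)*f2^2 + 2*f1*Ec + 2*f1*Wk + (1/8)*f1*f3)*(((-1)/16)*f3*Wk*Ec) + 2*((-1)*Ec + (-1)*Wk + ((-1)/16)*f3)^2*((-1)*O2*W2 + 1*O1*Ec + 1*O1*Wk + (1/8)*f3*O1 + ((-1)/8)*f2^2 + 2*f1*Ec + 2*f1*Wk + (1/8)*f1*f3)*(1*Wk*Ec + (1/16)*f3*Ec + (1/16)*f3*Wk) + (-4)*((-1)*Ec + (-1)*Wk + ((-1)/16)*f3)^3*((1/16)*f3*O2*W2 + ((-1)/16)*f3*O1*Ec + ((-1)/16)*f3*O1*Wk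 + ((-1)/16)*f2*O2*Wu + (1/8)*f2^2*Wk + (-1)*f1*Wk*Ec + ((-1)/16)*f1*f3*Ec + ((-1)/16)*f1*f3*Wk) + 18*((-2)*O1 + (-3)*f1)*(1*Wk*Ec + (1/16)*f3*Ec + (1/16)*f3*Wk)*(((-1)/16)*f3*Wk*Ec) + 2*((-2)*O1 + (-3)*f1)*((-1)*Ec + (-1)*Wk + ((-1)/16)*f3)*(1*Wk*Ec + (1/16)*f3*Ec + (1/16)*f3*Wk)^2 + (-12)*((-2)*O1 + (-3)*f1)*((-1)*Ec + (-1)*Wk + ((-1)/16)*f3)^2*(((-1)/16)*f3*Wk*Ec)), ((-27)*(((-1)/16)*f3*Wk*Ec)^2 + (-4)*(1*Wk*Ec + (1/16)*f3*Ec + (1/16)*f3*Wk)^3 + 18*((-1)*Ec + (-1)*Wk + ((-1)/16)*f3)*(1*Wk*Ec + (1/16)*f3*Ec + (1/16)*f3*Wk)*(((-1)/16)*f3*Wk*Ec) + 1*((-1)*Ec + (-1)*Wk + ((-1)/16)*f3)^2*(1*Wk*Ec + (1/16)*f3*Ec + (1/16)*f3*Wk)^2 + (-4)*((-1)*Ec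 + (-1)*Wk + ((-1)/16)*f3)^3*(((-1)/16)*f3*Wk*Ec)), fun s => ?_⟩
  have hU : -((f1 + s/16*f3) + (f1 + O1 + Ec*s) + (f1 + O1 + s*Wk)) = ((-2)*O1 + (-3)*f1) + s*((-1)*Ec + (-1)*Wk + ((-1)/16)*f3) := by ring
  have hV : ((f1 + s/16*f3)*(f1 + O1 + Ec*s) + (f1 + s/16*f3)*(f1 + O1 + s*Wk) + (f1 + O1 + Ec*s)*(f1 + O1 + s*Wk) - (1/16*f2)*(2*s*f2) - (0:ℝ)*(f2*k + s*Wu) - (s*O2)*W2) = (1*O1^2 + 4*f1*O1 + 3*f1^2) + s*(((-1)*O2*W2 + 1*O1*Ec + 1*O1*Wk + (1/8)*f3*O1 + ((-1)/8)*f2^2 + 2*f1*Ec + 2*f1*Wk + (1/8)*f1*f3) + s*(1*Wk*Ec + (1/16)*f3*Ec + (1/16)*f3*Wk)) := by ring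
  have hW : -((f1 + s/16*f3)*((f1 + O1 + Ec*s)*(f1 + O1 + s*Wk) - (s*O2)*W2) - (1/16*f2)*((2*s*f2)*(f1 + O1 + s*Wk) - (s*O2)*(f2*k + s*Wu)) + (0:ℝ)*((2*s*f2)*W2 - (f1 + O1 + Ec*s)*(f2*k + s*Wu))) = ((-1)*f1*O1^2 + (-2)*f1^2*O1 + (-1)*f1^3) + s*((((-1)/16)*f3*O1^2 + ((-1)/16)*f2^2*O2*k + (1/8)*f2^2*O1 + 1*f1*O2*W2 + (-1)*f1*O1*Ec + (-1)*f1*O1*Wk + ((-1)/8)*f1*f3*O1 + (1/8)*f1*f2^2 + (-1)*f1^2*Ec + (-1)*f1^2*Wk + ((-1)/16)*f1^2*f3) + s*(((1/16)*f3*O2*W2 + ((-1)/16)*f3*O1*Ec + ((-1)/16)*f3*O1*Wk + ((-1)/16)*f2*O2*Wu + (1/8)*f2^2*Wk + (-1)*f1*Wk*Ec + ((-1)/16)*f1*f3*Ec + ((-1)/16)*f1*f3*Wk) + s*(((-1)/16)*f3*Wk*Ec))) := by ring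
  rw [hU, hV, hW, disc_horner]
  rw [show ((-27)*((-1)*f1*O1^2 + (-2)*f1^2*O1 + (-1)*f1^3)^2 + (-4)*(1*O1^2 + 4*f1*O1 + 3*f1^2)^3 + 18*((-2)*O1 + (-3)*f1)*(1*O1^2 + 4*f1*O1 + 3*f1^2)*((-1)*f1*O1^2 + (-2)*f1^2*O1 + (-1)*f1^3) + 1*((-2)*O1 + (-3)*f1)^2*(1*O1^2 + 4*f1*O1 + 3*f1^2)^2 + (-4)*((-2)*O1 + (-3)*f1)^3*((-1)*f1*O1^2 + (-2)*f1^2*O1 + (-1)*f1^3)) = (0:ℝ) by ring, show ((-54)*((-1)*f1*O1^2 + (-2)*f1^2*O1 + (-1)*f1^3)*(((-1)/16)*f3*O1^2 + ((-1)/16)*f2^2*O2*k + (1/8)*f2^2*O1 + 1*f1*O2*W2 + (-1)*f1*O1*Ec + (-1)*f1*O1*Wk + ((-1)/8)*f1*f3*O1 + (1/8)*f1*f2^2 + (-1)*f1^2*Ec + (-1)*f1^2*Wk + ((-1)/16)*f1^2*f3) + (-12)*(1*O1^2 + 4*f1*O1 + 3*f1^2)^2*((-1)*O2*W2 + 1*O1*Ec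 + 1*O1*Wk + (1/8)*f3*O1 + ((-1)/8)*f2^2 + 2*f1*Ec + 2*f1*Wk + (1/8)*f1*f3) + 18*((-1)*Ec + (-1)*Wk + ((-1)/16)*f3)*(1*O1^2 + 4*f1*O1 + 3*f1^2)*((-1)*f1*O1^2 + (-2)*f1^2*O1 + (-1)*f1^3) + 18*((-2)*O1 + (-3)*f1)*((-1)*O2*W2 + 1*O1*Ec + 1*O1*Wk + (1/8)*f3*O1 + ((-1)/8)*f2^2 + 2*f1*Ec + 2*f1*Wk + (1/8)*f1*f3)*((-1)*f1*O1^2 + (-2)*f1^2*O1 + (-1)*f1^3) + 18*((-2)*O1 + (-3)*f1)*(1*O1^2 + 4*f1*O1 + 3*f1^2)*(((-1)/16)*f3*O1^2 + ((-1)/16)*f2^2*O2*k + (1/8)*f2^2*O1 + 1*f1*O2*W2 + (-1)*f1*O1*Ec + (-1)*f1*O1*Wk + ((-1)/8)*f1*f3*O1 + (1/8)*f1*f2^2 + (-1)*f1^2*Ec + (-1)*f1^2*Wk + ((-1)/16)*f1^2*f3) + 2*((-2)*O1 + (-3)*f1)*((-1)*Ec + (-1)*Wk + ((-1)/16)*f3)*(1*O1^2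 + 4*f1*O1 + 3*f1^2)^2 + 2*((-2)*O1 + (-3)*f1)^2*(1*O1^2 + 4*f1*O1 + 3*f1^2)*((-1)*O2*W2 + 1*O1*Ec + 1*O1*Wk + (1/8)*f3*O1 + ((-1)/8)*f2^2 + 2*f1*Ec + 2*f1*Wk + (1/8)*f1*f3) + (-12)*((-2)*O1 + (-3)*f1)^2*((-1)*Ec + (-1)*Wk + ((-1)/16)*f3)*((-1)*f1*O1^2 + (-2)*f1^2*O1 + (-1)*f1^3) + (-4)*((-2)*O1 + (-3)*f1)^3*(((-1)/16)*f3*O1^2 + ((-1)/16)*f2^2*O2*k + (1/8)*f2^2*O1 + 1*f1*O2*W2 + (-1)*f1*O1*Ec + (-1)*f1*O1*Wk + ((-1)/8)*f1*f3*O1 + (1/8)*f1*f2^2 + (-1)*f1^2*Ec + (-1)*f1^2*Wk + ((-1)/16)*f1^2*f3)) = (4*O1^4*O2*W2 + (1/4)*f2^2*O1^3*O2*k) by ring, zero_add]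

/-- If n(ū,k) Ω″(k) < 0, then for all sufficiently small a > 0 the modulation matrix B
has a pair of non-real complex conjugate eigenvalues (the system is not hyperbolic). -/
theorem modulation_elliptic_of_MI
    (f Ω : ℝ → ℝ) (hf : ContDiff ℝ (⊤ : ℕ∞) f) (hΩ : ContDiff ℝ (⊤ : ℕ∞) Ω)
    (k ubar : ℝ) (hk : 0 < k)
    (hO1 : deriv Ω k ≠ 0) (hres : 2 * Ω k ≠ Ω (2 * k)) :
    let f1 : ℝ := deriv f ubar
    let f2 : ℝ := iteratedDeriv 2 f ubar
    let f3 : ℝ := iteratedDeriv 3 f ubar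
    let O1 : ℝ := deriv Ω k
    let O2 : ℝ := iteratedDeriv 2 Ω k
    let ω₂fun : ℝ → ℝ → ℝ := fun u κ =>
      (κ / 16) * (κ * (iteratedDeriv 2 f u) ^ 2 / (2 * Ω κ - Ω (2 * κ))
        + iteratedDeriv 3 f u / 2)
    let ω₂ : ℝ := ω₂fun ubar k
    let ω₂u : ℝ := deriv (fun u => ω₂fun u k) ubar
    let ω₂k : ℝ := deriv (fun κ => ω₂fun ubar κ) k
    let A : ℝ := k * f2 / (4 * Ω k - 2 * Ω (2 * k))
    let b22 : ℝ → ℝ := fun a =>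
      f1 + O1 + (A ^ 2 / 2) * (-O1 + deriv Ω (2 * k) + ubar * f2) * a ^ 2
    let B : ℝ → Matrix (Fin 3) (Fin 3) ℝ := fun a =>
      !![f1 + a ^ 2 / 16 * f3, (1 / 16) * f2, 0;
         2 * a ^ 2 * f2, b22 a, a ^ 2 * O2;
         f2 * k + a ^ 2 * ω₂u, ω₂, f1 + O1 + a ^ 2 * ω₂k]
    let n : ℝ := k * (f2 ^ 2 / O1 + k * f2 ^ 2 / (2 * Ω k - Ω (2 * k)) + f3 / 2)
    n * O2 < 0 →
      ∃ ε > (0:ℝ), ∀ a : ℝ, 0 < a → a < ε →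
        ∃ z : ℂ, z.im ≠ 0
          ∧ (((B a).map (algebraMap ℝ ℂ)).charpoly).IsRoot z
          ∧ (((B a).map (algebraMap ℝ ℂ)).charpoly).IsRoot (starRingEnd ℂ z) := by
  intro f1 f2 f3 O1 O2 ω₂fun ω₂ ω₂u ω₂k A b22 B n hMI
  have hO1' : O1 ≠ 0 := hO1
  have hR : 2 * Ω k - Ω (2 * k) ≠ 0 := sub_ne_zero.mpr hres
  obtain ⟨Ec, hEc⟩ : ∃ E : ℝ, E = (A ^ 2 / 2) * (-O1 + deriv Ω (2 * k) + ubar * f2) :=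
    ⟨_, rfl⟩
  have hBa : ∀ a : ℝ, B a = !![f1 + a ^ 2 / 16 * f3, (1 / 16) * f2, 0;
      2 * a ^ 2 * f2, f1 + O1 + Ec * a ^ 2, a ^ 2 * O2;
      f2 * k + a ^ 2 * ω₂u, ω₂, f1 + O1 + a ^ 2 * ω₂k] := by
    intro a; rw [hEc]
  have hw2 : ω₂ = k / 16 * (k * f2 ^ 2 / (2 * Ω k - Ω (2 * k)) + f3 / 2) := rfl
  have hn : n = k * (f2 ^ 2 / O1 + k * f2 ^ 2 / (2 * Ω k - Ω (2 * k)) + f3 / 2) := rfl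
  have hO4 : (0:ℝ) < O1 ^ 4 := by
    rcases (pow_ne_zero 4 hO1').lt_or_gt with h | h
    · exact absurd h (not_lt.mpr (by positivity))
    · exact h
  have hd1lt : (4*O1^4*O2*ω₂ + (1/4)*f2^2*O1^3*O2*k) < 0 := by
    have heq : (4*O1^4*O2*ω₂ + (1/4)*f2^2*O1^3*O2*k) = O1 ^ 4 / 4 * (n * O2) := by
      rw [hw2, hn]
      field_simp
      ring
    rw [heq]
    exact mul_neg_of_pos_of_neg (by positivity) hMI
  obtain ⟨c2, c3, c4, c5, c6, hfac⟩ := mod_disc_factor f1 f2 f3 O1 O2 ω₂ ω₂u ω₂k Ec k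
  have hgc : Continuous (fun s : ℝ =>
      (4*O1^4*O2*ω₂ + (1/4)*f2^2*O1^3*O2*k) + s*(c2 + s*(c3 + s*(c4 + s*(c5 + s*c6))))) := by
    fun_prop
  have hev : ∀ᶠ s in nhds (0:ℝ),
      (4*O1^4*O2*ω₂ + (1/4)*f2^2*O1^3*O2*k) + s*(c2 + s*(c3 + s*(c4 + s*(c5 + s*c6)))) < 0 := by
    have h0 : Filter.Tendsto (fun s : ℝ =>
        (4*O1^4*O2*ω₂ + (1/4)*f2^2*O1^3*O2*k) + s*(c2 + s*(c3 + s*(c4 + s*(c5 + s*c6))))) (nhds 0)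
        (nhds ((4*O1^4*O2*ω₂ + (1/4)*f2^2*O1^3*O2*k) + 0*(c2 + 0*(c3 + 0*(c4 + 0*(c5 + 0*c6)))))) :=
      hgc.continuousAt
    exact h0.eventually_lt_const (by simpa using hd1lt)
  obtain ⟨δ, hδ, hδ'⟩ := Metric.eventually_nhds_iff.mp hev
  refine ⟨Real.sqrt δ, Real.sqrt_pos.mpr hδ, ?_⟩
  intro a ha haε
  have hs2 : a ^ 2 < δ := by
    have h1 : a ^ 2 < Real.sqrt δ ^ 2 := by
      apply pow_lt_pow_left₀ haε ha.le
      norm_num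
    rwa [Real.sq_sqrt hδ.le] at h1
  have hgs : (4*O1^4*O2*ω₂ + (1/4)*f2^2*O1^3*O2*k) + a^2*(c2 + a^2*(c3 + a^2*(c4 + a^2*(c5 + a^2*c6)))) < 0 := by
    apply hδ'
    rw [Real.dist_eq, sub_zero, _root_.abs_of_nonneg (sq_nonneg a)]
    exact hs2
  have hlt : 18*-((f1 + a^2/16*f3) + (f1 + O1 + Ec*a^2) + (f1 + O1 + a^2*ω₂k))*((f1 + a^2/16*f3)*(f1 + O1 + Ec*a^2) + (f1 + a^2/16*f3)*(f1 + O1 + a^2*ω₂k) + (f1 + O1 + Ec*a^2)*(f1 + O1 + a^2*ω₂k) - (1/16*f2)*(2*a^2*f2) - (0:ℝ)*(f2*k + a^2*ω₂u) - (a^2*O2)*ω₂)*-((f1 + a^2/16*f3)*((f1 + O1 + Ec*a^2)*(f1 + O1 + a^2*ω₂k) - (a^2*O2)*ω₂) - (1/16*f2)*((2*a^2*f2)*(f1 + O1 + a^2*ω₂k) - (a^2*O2)*(f2*k + a^2*ω₂u)) + (0:ℝ)*((2*a^2*f2)*ω₂ - (f1 + O1 + Ec*a^2)*(f2*k + a^2*ω₂u)))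 - 4*(-((f1 + a^2/16*f3) + (f1 + O1 + Ec*a^2) + (f1 + O1 + a^2*ω₂k)))^3*-((f1 + a^2/16*f3)*((f1 + O1 + Ec*a^2)*(f1 + O1 + a^2*ω₂k) - (a^2*O2)*ω₂) - (1/16*f2)*((2*a^2*f2)*(f1 + O1 + a^2*ω₂k) - (a^2*O2)*(f2*k + a^2*ω₂u)) + (0:ℝ)*((2*a^2*f2)*ω₂ - (f1 + O1 + Ec*a^2)*(f2*k + a^2*ω₂u))) + (-((f1 + a^2/16*f3) + (f1 + O1 + Ec*a^2) + (f1 + O1 + a^2*ω₂k)))^2*(((f1 + a^2/16*f3)*(f1 + O1 + Ec*a^2) + (f1 + a^2/16*f3)*(f1 + O1 + a^2*ω₂k) + (f1 + O1 + Ec*a^2)*(f1 + O1 + a^2*ω₂k) - (1/16*f2)*(2*a^2*f2) - (0:ℝ)*(f2*k + a^2*ω₂u) - (a^2*O2)*ω₂))^2 - 4*(((f1 + a^2/16*f3)*(f1 + O1 + Ec*a^2) + (f1 + a^2/16*f3)*(f1 + O1 + a^2*ω₂k) + (f1 + O1 + Ec*a^2)*(f1 + O1 + a^2*ω₂k) -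 (1/16*f2)*(2*a^2*f2) - (0:ℝ)*(f2*k + a^2*ω₂u) - (a^2*O2)*ω₂))^3 - 27*(-((f1 + a^2/16*f3)*((f1 + O1 + Ec*a^2)*(f1 + O1 + a^2*ω₂k) - (a^2*O2)*ω₂) - (1/16*f2)*((2*a^2*f2)*(f1 + O1 + a^2*ω₂k) - (a^2*O2)*(f2*k + a^2*ω₂u)) + (0:ℝ)*((2*a^2*f2)*ω₂ - (f1 + O1 + Ec*a^2)*(f2*k + a^2*ω₂u))))^2 < 0 := by
    rw [hfac (a^2)]
    exact mul_neg_of_pos_of_neg (pow_pos ha 2) hgs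
  obtain ⟨z, hzim, hz1, hz2⟩ := cubic_nonreal_root _ _ _ hlt
  have hcp : ((B a).map (algebraMap ℝ ℂ)).charpoly
      = X^3 + C ((-((f1 + a^2/16*f3) + (f1 + O1 + Ec*a^2) + (f1 + O1 + a^2*ω₂k)) : ℝ) : ℂ) * X^2 + C ((((f1 + a^2/16*f3)*(f1 + O1 + Ec*a^2) + (f1 + a^2/16*f3)*(f1 + O1 + a^2*ω₂k) + (f1 + O1 + Ec*a^2)*(f1 + O1 + a^2*ω₂k) - (1/16*f2)*(2*a^2*f2) - (0:ℝ)*(f2*k + a^2*ω₂u) - (a^2*O2)*ω₂) : ℝ) : ℂ) * X + C ((-((f1 + a^2/16*f3)*((f1 + O1 + Ec*a^2)*(f1 + O1 + a^2*ω₂k) - (a^2*O2)*ω₂) - (1/16*f2)*((2*a^2*f2)*(f1 + O1 + a^2*ω₂k) - (a^2*O2)*(f2*k + a^2*ω₂u)) + (0:ℝ)*((2*a^2*f2)*ω₂ - (f1 + O1 + Ec*a^2)*(f2*k + a^2*ω₂u))) : ℝ) : ℂ) := by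
    rw [Matrix.charpoly_map, hBa a, charpoly_fin3']
    simp only [Polynomial.map_add, Polynomial.map_mul, Polynomial.map_pow,
      Polynomial.map_X, Polynomial.map_C, Complex.coe_algebraMap]
  exact ⟨z, hzim, by rw [hcp]; exact hz1, by rw [hcp]; exact hz2⟩
end

section
/- Conversely, if n(ū,k) Ω″(k) > 0 and Ω′(k) ≠ 0, then for all sufficiently small a > 0 the matrix B has three distinct real eigenvalues, so the weakly nonlinear modulation system is strictly hyperbolic. -/
open Real Complex Polynomial

private noncomputable def ppoly (f1 f2 f3 O1 O2 w wu wk cc k a t : ℝ) : ℝ :=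
  (t - (f1 + a ^ 2 / 16 * f3)) *
      ((t - (f1 + O1 + cc * a ^ 2)) * (t - (f1 + O1 + a ^ 2 * wk)) - a ^ 2 * O2 * w)
    - 1 / 16 * f2 *
      (2 * a ^ 2 * f2 * (t - (f1 + O1 + a ^ 2 * wk)) + a ^ 2 * O2 * (f2 * k + a ^ 2 * wu))

private noncomputable def Fpoly (f2 f3 O1 O2 w wu wk cc k a s : ℝ) : ℝ :=
  O1 * s ^ 2 - O1 * O2 * w - f2 ^ 2 * O2 * k / 16
    + a * (s ^ 3 - s * O2 * w - s * O1 * cc - s * O1 * wk - s * f2 ^ 2 / 8)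
    + a ^ 2 * (O1 * wk * cc + f3 * O2 * w / 16 - f2 * O2 * wu / 16 + f2 ^ 2 * wk / 8
        - s ^ 2 * cc - s ^ 2 * wk - s ^ 2 * f3 / 16)
    + a ^ 3 * (s * wk * cc + s * f3 * cc / 16 + s * f3 * wk / 16)
    - a ^ 4 * (f3 * wk * cc / 16)

private lemma key_identity (f1 f2 f3 O1 O2 w wu wk cc k a s : ℝ) :
    ppoly f1 f2 f3 O1 O2 w wu wk cc k a (f1 + O1 + a * s)
      = a ^ 2 * Fpoly f2 f3 O1 O2 w wu wk cc k a s := by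
  unfold ppoly Fpoly; ring

private lemma eval_charpoly_fin3 (M : Matrix (Fin 3) (Fin 3) ℝ) (t : ℝ) :
    (M.charpoly).eval t =
      Matrix.det !![t - M 0 0, -(M 0 1), -(M 0 2);
                    -(M 1 0), t - M 1 1, -(M 1 2);
                    -(M 2 0), -(M 2 1), t - M 2 2] := by
  have h1 : (M.charpoly).eval t
      = ((Matrix.charmatrix M).map (Polynomial.evalRingHom t)).det := by
    rw [Matrix.charpoly, ← Polynomial.coe_evalRingHom, RingHom.map_det,
      RingHom.mapMatrix_apply]
  rw [h1]
  congr 1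
  ext i j
  fin_cases i <;> fin_cases j <;>
    simp [Matrix.map_apply]

private lemma exists_root_of_mul_neg (g : ℝ → ℝ) (hg : Continuous g) {u v : ℝ}
    (huv : u < v) (h : g u * g v < 0) : ∃ w, u < w ∧ w < v ∧ g w = 0 := by
  rcases mul_neg_iff.mp h with ⟨hu, hv⟩ | ⟨hu, hv⟩
  · obtain ⟨w, hw, hw0⟩ := intermediate_value_Ioo' huv.le hg.continuousOn
      (Set.mem_Ioo.mpr ⟨hv, hu⟩)
    exact ⟨w, hw.1, hw.2, hw0⟩
  · obtain ⟨w, hw, hw0⟩ := intermediate_value_Ioo huv.le hg.continuousOn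
      (Set.mem_Ioo.mpr ⟨hu, hv⟩)
    exact ⟨w, hw.1, hw.2, hw0⟩

private lemma cubic_eq_prod {P : Polynomial ℝ} (hm : P.Monic) (hd : P.natDegree = 3)
    {x y z : ℝ} (hxy : x ≠ y) (hxz : x ≠ z) (hyz : y ≠ z)
    (hx : P.eval x = 0) (hy : P.eval y = 0) (hz : P.eval z = 0) :
    P = (X - C x) * (X - C y) * (X - C z) := by
  set Q : Polynomial ℝ := (X - C x) * (X - C y) * (X - C z) with hQ
  have hQm : Q.Monic := ((monic_X_sub_C x).mul (monic_X_sub_C y)).mul (monic_X_sub_C z)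
  have hQd : Q.natDegree = 3 := by
    rw [hQ, ((monic_X_sub_C x).mul (monic_X_sub_C y)).natDegree_mul (monic_X_sub_C z),
      (monic_X_sub_C x).natDegree_mul (monic_X_sub_C y)]
    simp [Polynomial.natDegree_X_sub_C]
  by_contra hne
  have hD0 : P - Q ≠ 0 := sub_ne_zero.mpr hne
  have hdegP : P.degree = (3 : ℕ) := by
    rw [Polynomial.degree_eq_natDegree hm.ne_zero, hd]
  have hdegQ : Q.degree = (3 : ℕ) := by
    rw [Polynomial.degree_eq_natDegree hQm.ne_zero, hQd]
  have hdeg : (P - Q).degree < (3 : ℕ) := by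
    have := Polynomial.degree_sub_lt (hdegP.trans hdegQ.symm) hm.ne_zero
      (by rw [hm.leadingCoeff, hQm.leadingCoeff])
    rwa [hdegP] at this
  have hnd : (P - Q).natDegree < 3 :=
    (Polynomial.natDegree_lt_iff_degree_lt hD0).mpr hdeg
  have hroot : ∀ w : ℝ, P.eval w = 0 → Q.eval w = 0 → w ∈ (P - Q).roots.toFinset := by
    intro w hw1 hw2
    rw [Multiset.mem_toFinset, Polynomial.mem_roots hD0]
    simp [Polynomial.IsRoot, hw1, hw2]
  have hQx : Q.eval x = 0 := by simp [hQ]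
  have hQy : Q.eval y = 0 := by simp [hQ]
  have hQz : Q.eval z = 0 := by simp [hQ]
  have hsub : ({x, y, z} : Finset ℝ) ⊆ (P - Q).roots.toFinset := by
    intro w hw
    simp only [Finset.mem_insert, Finset.mem_singleton] at hw
    rcases hw with rfl | rfl | rfl
    exacts [hroot _ hx hQx, hroot _ hy hQy, hroot _ hz hQz]
  have hcard : ({x, y, z} : Finset ℝ).card = 3 := by
    rw [Finset.card_insert_of_notMem (by simp [hxy, hxz]),
      Finset.card_insert_of_notMem (by simp [hyz]), Finset.card_singleton]
  have h3 : 3 ≤ (P - Q).roots.toFinset.card := hcard ▸ Finset.card_le_card hsub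
  have h4 : (P - Q).roots.toFinset.card ≤ Multiset.card (P - Q).roots :=
    Multiset.toFinset_card_le _
  have h5 := Polynomial.card_roots' (P - Q)
  omega

/-- If n(ū,k) Ω″(k) > 0 and Ω′(k) ≠ 0, then for all sufficiently small a > 0 the
modulation matrix B has three distinct real eigenvalues: strict hyperbolicity. -/
theorem modulation_strictly_hyperbolic
    (f Ω : ℝ → ℝ) (hf : ContDiff ℝ (⊤ : ℕ∞) f) (hΩ : ContDiff ℝ (⊤ : ℕ∞) Ω)
    (k ubar : ℝ) (hk : 0 < k)
    (hO1 : deriv Ω k ≠ 0) (hres : 2 * Ω k ≠ Ω (2 * k)) :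
    let f1 : ℝ := deriv f ubar
    let f2 : ℝ := iteratedDeriv 2 f ubar
    let f3 : ℝ := iteratedDeriv 3 f ubar
    let O1 : ℝ := deriv Ω k
    let O2 : ℝ := iteratedDeriv 2 Ω k
    let ω₂fun : ℝ → ℝ → ℝ := fun u κ =>
      (κ / 16) * (κ * (iteratedDeriv 2 f u) ^ 2 / (2 * Ω κ - Ω (2 * κ))
        + iteratedDeriv 3 f u / 2)
    let ω₂ : ℝ := ω₂fun ubar k
    let ω₂u : ℝ := deriv (fun u => ω₂fun u k) ubar
    let ω₂k : ℝ := deriv (fun κ => ω₂fun ubar κ) k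
    let A : ℝ := k * f2 / (4 * Ω k - 2 * Ω (2 * k))
    let b22 : ℝ → ℝ := fun a =>
      f1 + O1 + (A ^ 2 / 2) * (-O1 + deriv Ω (2 * k) + ubar * f2) * a ^ 2
    let B : ℝ → Matrix (Fin 3) (Fin 3) ℝ := fun a =>
      !![f1 + a ^ 2 / 16 * f3, (1 / 16) * f2, 0;
         2 * a ^ 2 * f2, b22 a, a ^ 2 * O2;
         f2 * k + a ^ 2 * ω₂u, ω₂, f1 + O1 + a ^ 2 * ω₂k]
    let n : ℝ := k * (f2 ^ 2 / O1 + k * f2 ^ 2 / (2 * Ω k - Ω (2 * k)) + f3 / 2)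
    let n : ℝ := k * (f2 ^ 2 / O1 + k * f2 ^ 2 / (2 * Ω k - Ω (2 * k)) + f3 / 2)
    0 < n * O2 →
      ∃ ε > (0:ℝ), ∀ a : ℝ, 0 < a → a < ε →
        ∃ x y z : ℝ, x ≠ y ∧ x ≠ z ∧ y ≠ z ∧
          (B a).charpoly = (X - C x) * (X - C y) * (X - C z) := by
  intro f1 f2 f3 O1 O2 ω₂fun ω₂ ω₂u ω₂k A b22 B n0 n hpos
  have hden : 2 * Ω k - Ω (2 * k) ≠ 0 := sub_ne_zero.mpr hres
  set cc : ℝ := A ^ 2 / 2 * (-O1 + deriv Ω (2 * k) + ubar * f2) with hcc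
  -- the characteristic polynomial, evaluated, equals an explicit polynomial
  have hp : ∀ a t : ℝ, ((B a).charpoly).eval t
      = ppoly f1 f2 f3 O1 O2 ω₂ ω₂u ω₂k cc k a t := by
    intro a t
    rw [eval_charpoly_fin3]
    have hB : B a = !![f1 + a ^ 2 / 16 * f3, 1 / 16 * f2, 0;
         2 * a ^ 2 * f2, f1 + O1 + cc * a ^ 2, a ^ 2 * O2;
         f2 * k + a ^ 2 * ω₂u, ω₂, f1 + O1 + a ^ 2 * ω₂k] := rfl
    rw [hB]
    simp only [Matrix.det_fin_three, Matrix.cons_val', Matrix.cons_val_zero,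
      Matrix.cons_val_one, Matrix.head_cons, Matrix.empty_val',
      Matrix.cons_val_fin_one, Matrix.head_fin_const, Matrix.cons_val_two,
      Matrix.tail_cons, Matrix.of_apply]
    unfold ppoly
    ring
  -- value at a = 0
  have hp0 : ∀ t : ℝ, ppoly f1 f2 f3 O1 O2 ω₂ ω₂u ω₂k cc k 0 t
      = (t - f1) * (t - (f1 + O1)) ^ 2 := by
    intro t; unfold ppoly; ring
  have hF0 : ∀ s : ℝ, Fpoly f2 f3 O1 O2 ω₂ ω₂u ω₂k cc k 0 s
      = O1 * s ^ 2 - (O1 * O2 * ω₂ + f2 ^ 2 * O2 * k / 16) := by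
    intro s; unfold Fpoly; ring
  -- relate ω₂ and n
  have hω : ω₂ = k / 16 * (k * f2 ^ 2 / (2 * Ω k - Ω (2 * k)) + f3 / 2) := rfl
  have hnv : n = k * (f2 ^ 2 / O1 + k * f2 ^ 2 / (2 * Ω k - Ω (2 * k)) + f3 / 2) := rfl
  have hnω : O1 * O2 * ω₂ + f2 ^ 2 * O2 * k / 16 = O1 * (n * O2 / 16) := by
    rw [hω, hnv]; have hO1'' : O1 ≠ 0 := hO1; field_simp; ring
  have hO1' : O1 ≠ 0 := hO1
  clear_value f1 f2 f3 O1 O2 ω₂fun ω₂ ω₂u ω₂k A b22 B n0 n cc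
  set R : ℝ := Real.sqrt (n * O2) / 4 with hRdef
  have hR : 0 < R := div_pos (Real.sqrt_pos.mpr hpos) (by norm_num)
  have hR2 : R ^ 2 = n * O2 / 16 := by
    rw [hRdef, div_pow, Real.sq_sqrt hpos.le]; norm_num
  have hF0' : ∀ s : ℝ, Fpoly f2 f3 O1 O2 ω₂ ω₂u ω₂k cc k 0 s = O1 * (s ^ 2 - R ^ 2) := by
    intro s; rw [hF0 s, hnω, hR2]; ring
  set δ : ℝ := |O1| / 2 with hδdef
  have hδ : 0 < δ := div_pos (abs_pos.mpr hO1') (by norm_num)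
  have hδ2 : δ ^ 2 = O1 ^ 2 / 4 := by rw [hδdef, div_pow, _root_.sq_abs]; norm_num
  have hO1sq : 0 < O1 ^ 2 := sq_pos_of_ne_zero hO1'
  -- three sign conditions, eventually near a = 0
  have hL1 : Fpoly f2 f3 O1 O2 ω₂ ω₂u ω₂k cc k 0 (-(2 * R))
      * Fpoly f2 f3 O1 O2 ω₂ ω₂u ω₂k cc k 0 0 < 0 := by
    rw [hF0', hF0']
    have heq : O1 * ((-(2 * R)) ^ 2 - R ^ 2) * (O1 * ((0:ℝ) ^ 2 - R ^ 2))
        = -(3 * (O1 * R ^ 2) ^ 2) := by ring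
    rw [heq]
    have : 0 < (O1 * R ^ 2) ^ 2 := sq_pos_of_ne_zero (mul_ne_zero hO1' (pow_ne_zero 2 hR.ne'))
    linarith
  have hL2 : Fpoly f2 f3 O1 O2 ω₂ ω₂u ω₂k cc k 0 0
      * Fpoly f2 f3 O1 O2 ω₂ ω₂u ω₂k cc k 0 (2 * R) < 0 := by
    rw [hF0', hF0']
    have heq : O1 * ((0:ℝ) ^ 2 - R ^ 2) * (O1 * ((2 * R) ^ 2 - R ^ 2))
        = -(3 * (O1 * R ^ 2) ^ 2) := by ring
    rw [heq]
    have : 0 < (O1 * R ^ 2) ^ 2 := sq_pos_of_ne_zero (mul_ne_zero hO1' (pow_ne_zero 2 hR.ne'))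
    linarith
  have hL3 : ppoly f1 f2 f3 O1 O2 ω₂ ω₂u ω₂k cc k 0 (f1 - δ)
      * ppoly f1 f2 f3 O1 O2 ω₂ ω₂u ω₂k cc k 0 (f1 + δ) < 0 := by
    rw [hp0, hp0]
    have heq : (f1 - δ - f1) * (f1 - δ - (f1 + O1)) ^ 2
        * ((f1 + δ - f1) * (f1 + δ - (f1 + O1)) ^ 2)
        = -(δ ^ 2 * (δ ^ 2 - O1 ^ 2) ^ 2) := by ring
    rw [heq, hδ2]
    have heq2 : O1 ^ 2 / 4 * (O1 ^ 2 / 4 - O1 ^ 2) ^ 2 = 9 / 64 * (O1 ^ 2) ^ 3 := by ring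
    have h3 : 0 < (O1 ^ 2) ^ 3 := pow_pos hO1sq 3
    rw [heq2]
    linarith
  have hc1 : Continuous (fun a : ℝ => Fpoly f2 f3 O1 O2 ω₂ ω₂u ω₂k cc k a (-(2 * R))
      * Fpoly f2 f3 O1 O2 ω₂ ω₂u ω₂k cc k a 0) := by unfold Fpoly; fun_prop
  have hc2 : Continuous (fun a : ℝ => Fpoly f2 f3 O1 O2 ω₂ ω₂u ω₂k cc k a 0
      * Fpoly f2 f3 O1 O2 ω₂ ω₂u ω₂k cc k a (2 * R)) := by unfold Fpoly; fun_prop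
  have hc3 : Continuous (fun a : ℝ => ppoly f1 f2 f3 O1 O2 ω₂ ω₂u ω₂k cc k a (f1 - δ)
      * ppoly f1 f2 f3 O1 O2 ω₂ ω₂u ω₂k cc k a (f1 + δ)) := by unfold ppoly; fun_prop
  have hc4 : Continuous (fun a : ℝ => a * (2 * R)) := by fun_prop
  have hev1 := (hc1.tendsto 0).eventually_lt_const hL1
  have hev2 := (hc2.tendsto 0).eventually_lt_const hL2
  have hev3 := (hc3.tendsto 0).eventually_lt_const hL3
  have hev4 : ∀ᶠ a : ℝ in nhds 0, a * (2 * R) < δ :=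
    (hc4.tendsto 0).eventually_lt_const (by simpa using hδ)
  have hall := hev1.and (hev2.and (hev3.and hev4))
  rw [Metric.eventually_nhds_iff] at hall
  obtain ⟨ε, hε, hball⟩ := hall
  refine ⟨ε, hε, ?_⟩
  intro a ha0 haε
  obtain ⟨h1, h2, h3, h4⟩ := hball (show dist a 0 < ε by
    rw [Real.dist_eq, sub_zero, abs_of_pos ha0]; exact haε)
  -- find the roots by the intermediate value theorem
  have hFc : Continuous (fun s => Fpoly f2 f3 O1 O2 ω₂ ω₂u ω₂k cc k a s) := by
    unfold Fpoly; fun_prop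
  have hpc : Continuous (fun t => ppoly f1 f2 f3 O1 O2 ω₂ ω₂u ω₂k cc k a t) := by
    unfold ppoly; fun_prop
  obtain ⟨s1, hs1l, hs1r, hs1⟩ := exists_root_of_mul_neg _ hFc
    (show -(2 * R) < (0:ℝ) by linarith) h1
  obtain ⟨s2, hs2l, hs2r, hs2⟩ := exists_root_of_mul_neg _ hFc
    (show (0:ℝ) < 2 * R by linarith) h2
  obtain ⟨x, hxl, hxr, hx⟩ := exists_root_of_mul_neg _ hpc
    (show f1 - δ < f1 + δ by linarith) h3
  set y : ℝ := f1 + O1 + a * s1 with hydef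
  set z : ℝ := f1 + O1 + a * s2 with hzdef
  -- bounds on a * s1, a * s2
  have hb1 : -δ < a * s1 ∧ a * s1 < δ := by
    have h5 : a * -(2 * R) < a * s1 := mul_lt_mul_of_pos_left hs1l ha0
    have h6 : a * -(2 * R) = -(a * (2 * R)) := by ring
    have h7 : a * s1 < a * 0 := mul_lt_mul_of_pos_left hs1r ha0
    constructor <;> [linarith; linarith [mul_zero a]]
  have hb2 : -δ < a * s2 ∧ a * s2 < δ := by
    have h5 : 0 < a * s2 := mul_pos ha0 hs2l
    have h6 : a * s2 < a * (2 * R) := mul_lt_mul_of_pos_left hs2r ha0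
    constructor <;> linarith
  -- eigenvalue evaluations
  have hx0 : ((B a).charpoly).eval x = 0 := by rw [hp]; exact hx
  have hy0 : ((B a).charpoly).eval y = 0 := by
    rw [hp, hydef, key_identity, hs1, mul_zero]
  have hz0 : ((B a).charpoly).eval z = 0 := by
    rw [hp, hzdef, key_identity, hs2, mul_zero]
  -- distinctness
  have hyz : y ≠ z := by
    intro h
    have h' : a * s1 = a * s2 := by
      rw [hydef, hzdef] at h; linarith
    have := mul_left_cancel₀ ha0.ne' h'
    linarith
  have hfar : ∀ w : ℝ, -δ < w → w < δ → x ≠ f1 + O1 + w := by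
    intro w hw1 hw2 heq
    rcases hO1'.lt_or_gt with hneg | hpos
    · have habs : 2 * δ = -O1 := by rw [hδdef, abs_of_neg hneg]; ring
      linarith
    · have habs : 2 * δ = O1 := by rw [hδdef, abs_of_pos hpos]; ring
      linarith
  have hxy : x ≠ y := hfar (a * s1) hb1.1 hb1.2
  have hxz : x ≠ z := hfar (a * s2) hb2.1 hb2.2
  have hdeg3 : ((B a).charpoly).natDegree = 3 := by
    rw [Matrix.charpoly_natDegree_eq_dim]; simp
  exact ⟨x, y, z, hxy, hxz, hyz,
    cubic_eq_prod (Matrix.charpoly_monic _) hdeg3 hxy hxz hyz hx0 hy0 hz0⟩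
end

section
/- For the water-wave dispersion Ω(k) = √(k tanh k), Ω is real-analytic on (0,∞), strictly increasing, and strictly concave for k > 0: Ω′(k) > 0 and Ω″(k) < 0 for all k > 0. -/
/-!
Write `Ω = √F` with `F k = k tanh k`, `t = tanh k`, so that `F' = t + k (1 - t²)` and
`F'' = 2 (1 - t²)(1 - k t)`. Then `Ω' = F' / (2√F) > 0`, and `Ω'' = (2 F F'' - F'²) / (4 F √F)`,
whose numerator is negative because
`F'² - 2 F F'' = (t - k (1 - t²))² + 4 k² t² (1 - t²) > 0` for `k > 0`.
Analyticity holds because `tanh = sinh / cosh` and `√` is analytic away from `0`.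
-/

open Real Filter Topology

namespace Real

theorem tanh_pos {x : ℝ} (hx : 0 < x) : 0 < tanh x := by
  rw [tanh_eq_sinh_div_cosh]
  exact div_pos (sinh_pos_iff.2 hx) (cosh_pos x)

theorem hasDerivAt_tanh (x : ℝ) : HasDerivAt tanh (1 - tanh x ^ 2) x := by
  rw [show tanh = fun y => sinh y / cosh y from funext tanh_eq_sinh_div_cosh]
  refine ((hasDerivAt_sinh x).fun_div (hasDerivAt_cosh x) (cosh_pos x).ne').congr_deriv ?_
  field_simp

theorem analyticAt_tanh (x : ℝ) : AnalyticAt ℝ tanh x := by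
  rw [show tanh = fun y => sinh y / cosh y from funext tanh_eq_sinh_div_cosh]
  exact analyticAt_sinh.div analyticAt_cosh (cosh_pos x).ne'

end Real

theorem AnalyticAt.sqrt {f : ℝ → ℝ} {x : ℝ} (hf : AnalyticAt ℝ f x) (hx : f x ≠ 0) :
    AnalyticAt ℝ (fun y => √(f y)) x :=
  (hf.contDiffAt.sqrt hx).analyticAt

theorem iteratedDeriv_two_sqrt_comp {f f' : ℝ → ℝ} {f'' x : ℝ}
    (hf : ∀ᶠ y in 𝓝 x, HasDerivAt f (f' y) y) (hf' : HasDerivAt f' f'' x) (hx : 0 < f x) :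
    iteratedDeriv 2 (fun y => √(f y)) x = (2 * f x * f'' - f' x ^ 2) / (4 * f x * √(f x)) := by
  have hpos : ∀ᶠ y in 𝓝 x, 0 < f y :=
    hf.self_of_nhds.continuousAt.eventually (lt_mem_nhds hx)
  have hderiv : deriv (fun y => √(f y)) =ᶠ[𝓝 x] fun y => f' y / (2 * √(f y)) := by
    filter_upwards [hf, hpos] with y hfy hy
    exact (hfy.sqrt hy.ne').deriv
  have hquot := hf'.fun_div ((hf.self_of_nhds.sqrt hx.ne').const_mul 2) (by positivity)
  rw [iteratedDeriv_succ, iteratedDeriv_one, hderiv.deriv_eq, hquot.deriv]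
  have hsq : √(f x) ^ 2 = f x := sq_sqrt hx.le
  field_simp
  rw [hsq]
  ring

section Dispersion

variable (k : ℝ)

theorem hasDerivAt_mul_tanh :
    HasDerivAt (fun y => y * tanh y) (tanh k + k * (1 - tanh k ^ 2)) k :=
  ((hasDerivAt_id' k).fun_mul (hasDerivAt_tanh k)).congr_deriv (by ring)

theorem hasDerivAt_tanh_add_mul_one_sub_tanh_sq :
    HasDerivAt (fun y => tanh y + y * (1 - tanh y ^ 2))
      (2 * (1 - tanh k ^ 2) * (1 - k * tanh k)) k :=
  ((hasDerivAt_tanh k).fun_add ((hasDerivAt_id' k).fun_mul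
    (((hasDerivAt_tanh k).fun_pow 2).const_sub 1))).congr_deriv (by ring)

variable {k}

theorem tanh_add_mul_one_sub_tanh_sq_pos (hk : 0 < k) : 0 < tanh k + k * (1 - tanh k ^ 2) := by
  nlinarith [tanh_sq_lt_one k, tanh_pos hk]

theorem two_mul_mul_tanh_mul_lt_sq (hk : 0 < k) :
    2 * (k * tanh k) * (2 * (1 - tanh k ^ 2) * (1 - k * tanh k)) <
      (tanh k + k * (1 - tanh k ^ 2)) ^ 2 := by
  set t := tanh k
  have ht : 0 < t := tanh_pos hk
  have ht2 : 0 < 1 - t ^ 2 := sub_pos.2 (tanh_sq_lt_one k)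
  nlinarith [sq_nonneg (t - k * (1 - t ^ 2)), mul_pos (mul_pos (pow_pos hk 2) (pow_pos ht 2)) ht2]

end Dispersion

/-- The water-wave dispersion Ω(k) = √(k tanh k) is real-analytic on (0,∞),
strictly increasing, and strictly concave for k > 0: Ω′ > 0, Ω″ < 0. -/
theorem waterwave_dispersion_properties :
    let Ω : ℝ → ℝ := fun k => Real.sqrt (k * Real.tanh k)
    (∀ k : ℝ, 0 < k → AnalyticAt ℝ Ω k)
    ∧ StrictMonoOn Ω (Set.Ioi 0)
    ∧ (∀ k : ℝ, 0 < k → 0 < deriv Ω k)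
    ∧ (∀ k : ℝ, 0 < k → iteratedDeriv 2 Ω k < 0) := by
  intro Ω
  have hF : ∀ k : ℝ, 0 < k → 0 < k * tanh k := fun k hk => mul_pos hk (tanh_pos hk)
  have hΩ : ∀ k : ℝ, 0 < k →
      HasDerivAt Ω ((tanh k + k * (1 - tanh k ^ 2)) / (2 * √(k * tanh k))) k :=
    fun k hk => (hasDerivAt_mul_tanh k).sqrt (hF k hk).ne'
  have hΩ' : ∀ k : ℝ, 0 < k → 0 < deriv Ω k := fun k hk => by
    rw [(hΩ k hk).deriv]
    exact div_pos (tanh_add_mul_one_sub_tanh_sq_pos hk) (mul_pos two_pos (sqrt_pos.2 (hF k hk)))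
  refine ⟨fun k hk => (analyticAt_id.mul (analyticAt_tanh k)).sqrt (hF k hk).ne', ?_, hΩ', ?_⟩
  · exact strictMonoOn_of_deriv_pos (convex_Ioi 0)
      (fun k hk => (hΩ k hk).continuousAt.continuousWithinAt)
      fun k hk => hΩ' k (by rwa [interior_Ioi] at hk)
  · intro k hk
    rw [iteratedDeriv_two_sqrt_comp (Eventually.of_forall hasDerivAt_mul_tanh)
      (hasDerivAt_tanh_add_mul_one_sub_tanh_sq k) (hF k hk)]
    exact div_neg_of_neg_of_pos (by linarith [two_mul_mul_tanh_mul_lt_sq hk])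
      (mul_pos (mul_pos four_pos (hF k hk)) (sqrt_pos.2 (hF k hk)))
end
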